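/- arXiv:2202.04756 — 2 statements merged into one kernel-verified Lean document; each statement's English description precedes it below -/
import Mathlib

section
/- Let X be a finite connected simple graph with at least one edge. Then γ(X) is connected if and only if X is not isomorphic to a cycle graph Cₙ (n ≥ 3) and not isomorphic to a path graph Pₙ (n ≥ 2). -/
open SimpleGraph

/-- The symmetric edge graph `γ(X)` of a simple graph `X`: its vertices are the darts
(ordered pairs of adjacent vertices) of `X`, and two darts `(u,v)` and `(u',v')` are adjacent
iff (`v = u'` and `u ≠ v'`) or (`v' = u` and `u' ≠ v`). -/
def symEdgeGraph {V : Type*} (X : SimpleGraph V) : SimpleGraph X.Dart where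
  Adj d d' := (d.snd = d'.fst ∧ d.fst ≠ d'.snd) ∨ (d'.snd = d.fst ∧ d'.fst ≠ d.snd)
  symm := ⟨fun d d' h => Or.symm h⟩
  loopless := by
    constructor
    rintro d (⟨h1, -⟩ | ⟨h1, -⟩) <;> exact X.loopless.irrefl d.fst (h1 ▸ d.adj)

namespace SEG
variable {V : Type*} {X : SimpleGraph V}

lemma adj1 {d d' : X.Dart} (h : d.snd = d'.fst) (h2 : d.fst ≠ d'.snd) :
    (symEdgeGraph X).Adj d d' := Or.inl ⟨h, h2⟩

lemma symm_fst (d : X.Dart) : d.symm.fst = d.snd := rfl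
lemma symm_snd (d : X.Dart) : d.symm.snd = d.fst := rfl

lemma adj_symm_symm {d d' : X.Dart} (h : (symEdgeGraph X).Adj d d') :
    (symEdgeGraph X).Adj d.symm d'.symm := by
  rcases h with ⟨h1, h2⟩ | ⟨h1, h2⟩
  · exact Or.inr ⟨h1.symm, fun hc => h2 hc.symm⟩
  · exact Or.inl ⟨h1.symm, fun hc => h2 hc.symm⟩

lemma reach_symm {d d' : X.Dart} (h : (symEdgeGraph X).Reachable d d') :
    (symEdgeGraph X).Reachable d.symm d'.symm := by
  obtain ⟨w⟩ := h
  induction w with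
  | nil => exact Reachable.refl _
  | cons h p ih => exact ((adj_symm_symm h).reachable).trans ih

/-- reversibility -/
def Rev (d : X.Dart) : Prop := (symEdgeGraph X).Reachable d d.symm

lemma rev_symm {d : X.Dart} (h : Rev d) : Rev d.symm := by
  show (symEdgeGraph X).Reachable d.symm d.symm.symm
  rw [Dart.symm_symm]
  exact h.symm

lemma rev_prop {d d' : X.Dart} (h : (symEdgeGraph X).Adj d d') (hd : Rev d) : Rev d' :=
  (h.symm.reachable.trans hd).trans (reach_symm h.reachable)

lemma rev_of_snd_eq (v0 : V)
    (hv0 : ∃ a b c : V, X.Adj v0 a ∧ X.Adj v0 b ∧ X.Adj v0 c ∧ a ≠ b ∧ a ≠ c ∧ b ≠ c)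
    (d : X.Dart) (hd : d.snd = v0) : Rev d := by
  obtain ⟨a, b, c, ha, hb, hc, hab, hac, hbc⟩ := hv0
  -- find two neighbors distinct from d.fst
  have key : ∀ u : V, X.Adj v0 u → ∃ p q : V, X.Adj v0 p ∧ X.Adj v0 q ∧ p ≠ q ∧ p ≠ u ∧ q ≠ u := by
    intro u _
    by_cases hua : u = a
    · exact ⟨b, c, hb, hc, hbc, by rintro rfl; exact hab hua.symm, by rintro rfl; exact hac hua.symm⟩
    by_cases hub : u = b
    · exact ⟨a, c, ha, hc, hac, fun h => hua h.symm, by rintro rfl; exact hbc hub.symm⟩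
    · exact ⟨a, b, ha, hb, hab, fun h => hua h.symm, fun h => hub h.symm⟩
  have hadj : X.Adj v0 d.fst := hd ▸ d.adj.symm
  obtain ⟨p, q, hp, hq, hpq, hpu, hqu⟩ := key d.fst hadj
  have e1 : X.Dart := ⟨(v0, p), hp⟩
  have step1 : (symEdgeGraph X).Adj d ⟨(v0, p), hp⟩ := adj1 hd (fun h => hpu h.symm)
  have step2 : (symEdgeGraph X).Adj (⟨(v0, p), hp⟩ : X.Dart) ⟨(q, v0), hq.symm⟩ :=
    Or.inr ⟨rfl, fun h => hpq h.symm⟩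
  have step3 : (symEdgeGraph X).Adj (⟨(q, v0), hq.symm⟩ : X.Dart) ⟨(v0, d.fst), hadj⟩ :=
    adj1 rfl hqu
  have hsymm : d.symm = ⟨(v0, d.fst), hadj⟩ := by
    apply Dart.ext
    exact Prod.ext hd rfl
  rw [Rev, hsymm]
  exact (step1.reachable.trans step2.reachable).trans step3.reachable
end SEG

namespace SEG
variable {V : Type*} {X : SimpleGraph V}

lemma all_rev (v0 : V)
    (hv0 : ∃ a b c : V, X.Adj v0 a ∧ X.Adj v0 b ∧ X.Adj v0 c ∧ a ≠ b ∧ a ≠ c ∧ b ≠ c)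
    (hconn : X.Preconnected) (d : X.Dart) : Rev d := by
  obtain ⟨p⟩ := hconn d.snd v0
  generalize hn : p.length = n
  induction n using Nat.strong_induction_on generalizing d p with
  | _ n ih =>
    cases p with
    | nil => exact rev_of_snd_eq _ hv0 d rfl
    | @cons _ w _ h q =>
      simp only [Walk.length_cons] at hn
      by_cases hw : w = d.fst
      · have hrev : Rev d.symm :=
          ih q.length (by omega) d.symm (q.copy hw rfl) (Walk.length_copy _ _ _)
        have := rev_symm hrev
        rwa [Dart.symm_symm] at this
      · have hadj : (symEdgeGraph X).Adj d ⟨(d.snd, w), h⟩ :=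
          adj1 rfl (fun hc => hw hc.symm)
        have hrev : Rev (⟨(d.snd, w), h⟩ : X.Dart) := ih q.length (by omega) _ q rfl
        exact rev_prop hadj.symm hrev

end SEG

namespace SEG
variable {V : Type*} {X : SimpleGraph V}

lemma reach_end (v0 : V)
    (hv0 : ∃ a b c : V, X.Adj v0 a ∧ X.Adj v0 b ∧ X.Adj v0 c ∧ a ≠ b ∧ a ≠ c ∧ b ≠ c)
    (hconn : X.Preconnected) :
    ∀ {x y : V} (_ : X.Walk x y) (d : X.Dart), d.snd = x →
      ∃ e : X.Dart, e.snd = y ∧ (symEdgeGraph X).Reachable d e := by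
  intro x y p
  induction p with
  | nil => exact fun d hd => ⟨d, hd, Reachable.refl d⟩
  | @cons a w b h q ih =>
    intro d hd
    subst hd
    by_cases hw : w = d.fst
    · obtain ⟨e, he, hre⟩ := ih d.symm hw.symm
      exact ⟨e, he, (all_rev v0 hv0 hconn d).trans hre⟩
    · have hadj : (symEdgeGraph X).Adj d ⟨(d.snd, w), h⟩ :=
        adj1 rfl (fun hc => hw hc.symm)
      obtain ⟨e, he, hre⟩ := ih ⟨(d.snd, w), h⟩ rfl
      exact ⟨e, he, hadj.reachable.trans hre⟩

lemma connected_of_deg3 (hconn : X.Connected) (v0 : V)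
    (hv0 : ∃ a b c : V, X.Adj v0 a ∧ X.Adj v0 b ∧ X.Adj v0 c ∧ a ≠ b ∧ a ≠ c ∧ b ≠ c) :
    (symEdgeGraph X).Connected := by
  obtain ⟨a, b, c, ha, hb, hc, hab, hac, hbc⟩ := hv0
  have hne : Nonempty X.Dart := ⟨⟨(v0, a), ha⟩⟩
  rw [connected_iff]
  refine ⟨fun d e => ?_, hne⟩
  obtain ⟨p⟩ := hconn.preconnected d.snd e.snd
  obtain ⟨f, hf, hrf⟩ := reach_end v0 ⟨a, b, c, ha, hb, hc, hab, hac, hbc⟩ hconn.preconnected p d rfl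
  by_cases hfe : f = e
  · exact hfe ▸ hrf
  · have hfst : f.fst ≠ e.fst := by
      intro hc
      exact hfe (Dart.ext _ _ (Prod.ext hc hf))
    have hadj : (symEdgeGraph X).Adj f e.symm := adj1 hf hfst
    have hrev : Rev e.symm := all_rev v0 ⟨a, b, c, ha, hb, hc, hab, hac, hbc⟩ hconn.preconnected e.symm
    have : (symEdgeGraph X).Reachable f e := by
      have := (hadj.reachable.trans hrev)
      rwa [Dart.symm_symm] at this
    exact hrf.trans this

end SEG

namespace SEG
variable {V : Type*} {X : SimpleGraph V}

lemma invariant {P : X.Dart → Prop}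
    (hP : ∀ d d', (symEdgeGraph X).Adj d d' → (P d ↔ P d'))
    {d e : X.Dart} (h : (symEdgeGraph X).Reachable d e) : P d ↔ P e := by
  obtain ⟨w⟩ := h
  induction w with
  | nil => rfl
  | cons h p ih => exact (hP _ _ h).trans ih

lemma cyc_core {m : ℕ} {a b c : Fin (m + 2)}
    (hab : (cycleGraph (m + 2)).Adj a b) (hbc : (cycleGraph (m + 2)).Adj b c)
    (hac : a ≠ c) : (b - a = 1 ↔ c - b = 1) := by
  rw [cycleGraph_adj] at hab hbc
  constructor
  · intro h
    rcases hbc with h' | h'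
    · exfalso; apply hac; have : b - c = b - a := by rw [h', h]
      exact (sub_right_injective this).symm
    · exact h'
  · intro h
    rcases hab with h' | h'
    · exfalso; apply hac
      have : a - b = c - b := by rw [h', h]
      exact sub_left_injective this
    · exact h'

lemma not_connected_cycle {n : ℕ} (hn : 3 ≤ n) (e : X ≃g cycleGraph n) :
    ¬ (symEdgeGraph X).Connected := by
  obtain ⟨m, rfl⟩ : ∃ m, n = m + 2 := ⟨n - 2, by omega⟩
  intro hc
  set P : X.Dart → Prop := fun d => e d.snd - e d.fst = 1 with hPdef
  have hP : ∀ d d', (symEdgeGraph X).Adj d d' → (P d ↔ P d') := by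
    rintro d d' (⟨h1, h2⟩ | ⟨h1, h2⟩)
    · have hab : (cycleGraph (m+2)).Adj (e d.fst) (e d.snd) := e.map_rel_iff.mpr d.adj
      have hbc : (cycleGraph (m+2)).Adj (e d'.fst) (e d'.snd) := e.map_rel_iff.mpr d'.adj
      rw [← h1] at hbc
      have hac : e d.fst ≠ e d'.snd := fun hh => h2 (e.injective hh)
      simpa [hPdef, ← h1] using cyc_core hab hbc hac
    · have hab : (cycleGraph (m+2)).Adj (e d'.fst) (e d'.snd) := e.map_rel_iff.mpr d'.adj
      have hbc : (cycleGraph (m+2)).Adj (e d.fst) (e d.snd) := e.map_rel_iff.mpr d.adj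
      rw [← h1] at hbc
      have hac : e d'.fst ≠ e d.snd := fun hh => h2 (e.injective hh)
      simpa [hPdef, ← h1] using (cyc_core hab hbc hac).symm
  have hadj01 : (cycleGraph (m+2)).Adj 0 1 := by
    rw [cycleGraph_adj]; right; simp
  have hadjX : X.Adj (e.symm 0) (e.symm 1) := by
    rw [← e.map_rel_iff]; simpa using hadj01
  set d0 : X.Dart := ⟨(e.symm 0, e.symm 1), hadjX⟩
  have h0 : P d0 := by simp [hPdef, d0]
  have h1 : ¬ P d0.symm := by
    simp only [hPdef, d0, Dart.symm_mk, Prod.fst_swap, Prod.snd_swap, Prod.swap_prod_mk,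
      RelIso.apply_symm_apply]
    intro hh
    have hv : ((0 : Fin (m+2)) - 1).val = m + 1 := by
      rw [Fin.sub_def]
      simp only [Fin.val_one, Fin.val_zero]
      rw [Nat.mod_eq_of_lt (by omega)]
      omega
    rw [hh] at hv
    rw [Fin.val_one] at hv
    omega
  exact h1 ((invariant hP (hc.preconnected d0 d0.symm)).mp h0)

end SEG

namespace SEG
variable {V : Type*} {X : SimpleGraph V}

lemma path_core {n : ℕ} {a b c : Fin n}
    (hab : (pathGraph n).Adj a b) (hbc : (pathGraph n).Adj b c)
    (hac : a ≠ c) : (a < b ↔ b < c) := by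
  rw [pathGraph_adj] at hab hbc
  have hac' : a.val ≠ c.val := fun h => hac (Fin.ext h)
  rw [Fin.lt_def, Fin.lt_def]
  omega

lemma not_connected_path {n : ℕ} (hn : 2 ≤ n) (e : X ≃g pathGraph n) :
    ¬ (symEdgeGraph X).Connected := by
  obtain ⟨m, rfl⟩ : ∃ m, n = m + 2 := ⟨n - 2, by omega⟩
  intro hc
  set P : X.Dart → Prop := fun d => e d.fst < e d.snd with hPdef
  have hP : ∀ d d', (symEdgeGraph X).Adj d d' → (P d ↔ P d') := by
    rintro d d' (⟨h1, h2⟩ | ⟨h1, h2⟩)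
    · have hab : (pathGraph (m+2)).Adj (e d.fst) (e d.snd) := e.map_rel_iff.mpr d.adj
      have hbc : (pathGraph (m+2)).Adj (e d'.fst) (e d'.snd) := e.map_rel_iff.mpr d'.adj
      rw [← h1] at hbc
      have hac : e d.fst ≠ e d'.snd := fun hh => h2 (e.injective hh)
      simpa [hPdef, ← h1] using path_core hab hbc hac
    · have hab : (pathGraph (m+2)).Adj (e d'.fst) (e d'.snd) := e.map_rel_iff.mpr d'.adj
      have hbc : (pathGraph (m+2)).Adj (e d.fst) (e d.snd) := e.map_rel_iff.mpr d.adj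
      rw [← h1] at hbc
      have hac : e d'.fst ≠ e d.snd := fun hh => h2 (e.injective hh)
      simpa [hPdef, ← h1] using (path_core hab hbc hac).symm
  have hadj01 : (pathGraph (m+2)).Adj 0 1 := by
    rw [pathGraph_adj]; left; simp [Fin.val_one]
  have hadjX : X.Adj (e.symm 0) (e.symm 1) := by
    rw [← e.map_rel_iff]; simpa using hadj01
  set d0 : X.Dart := ⟨(e.symm 0, e.symm 1), hadjX⟩
  have h0 : P d0 := by
    simp only [hPdef, d0, RelIso.apply_symm_apply]
    rw [Fin.lt_def]
    simp [Fin.val_one]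
  have h1 : ¬ P d0.symm := by
    simp only [hPdef, d0, Dart.symm_mk, Prod.fst_swap, Prod.snd_swap, Prod.swap_prod_mk,
      RelIso.apply_symm_apply]
    rw [Fin.lt_def]
    simp
  exact h1 ((invariant hP (hc.preconnected d0 d0.symm)).mp h0)

end SEG

namespace SEG
variable {V : Type*} {X : SimpleGraph V}

open scoped Classical in
/-- next vertex: a neighbor of `c` different from `p`, if any. -/
noncomputable def nextFun (X : SimpleGraph V) (p c : V) : V :=
  if h : ∃ w, X.Adj c w ∧ w ≠ p then h.choose else c

lemma nextFun_spec {p c : V} (h : ∃ w, X.Adj c w ∧ w ≠ p) :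
    X.Adj c (nextFun X p c) ∧ nextFun X p c ≠ p := by
  rw [nextFun, dif_pos h]
  exact h.choose_spec

noncomputable def seq (X : SimpleGraph V) (v0 v1 : V) : ℕ → V
  | 0 => v0
  | 1 => v1
  | (k+2) => nextFun X (seq X v0 v1 k) (seq X v0 v1 (k+1))

lemma seq_step {v0 v1 : V} (k : ℕ)
    (h : ∃ w, X.Adj (seq X v0 v1 (k+1)) w ∧ w ≠ seq X v0 v1 k) :
    X.Adj (seq X v0 v1 (k+1)) (seq X v0 v1 (k+2)) ∧ seq X v0 v1 (k+2) ≠ seq X v0 v1 k := by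
  have := nextFun_spec h
  exact this

/-- structure of the first repetition in the sequence -/
lemma firstRepeat
    (hdeg : ∀ v a b c : V, X.Adj v a → X.Adj v b → X.Adj v c → a = b ∨ a = c ∨ b = c)
    (f : ℕ → V) (j : ℕ)
    (h1 : ∀ k, k + 1 ≤ j → X.Adj (f k) (f (k+1)))
    (h2 : ∀ k, k + 2 ≤ j → f (k+2) ≠ f k)
    (hinj : ∀ a b, a < b → b < j → f a ≠ f b)
    (i : ℕ) (hij : i < j) (heq : f i = f j) :
    i = 0 ∧ 3 ≤ j ∧ X.Adj (f 0) (f 1) ∧ X.Adj (f 0) (f (j-1)) ∧ f 1 ≠ f (j-1) := by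
  have hj1 : 1 ≤ j := by omega
  have hadjlast : X.Adj (f (j-1)) (f j) := by
    have := h1 (j-1) (by omega)
    have hjj : j - 1 + 1 = j := by omega
    rwa [hjj] at this
  have hi0 : i = 0 := by
    by_contra hi
    have hi1 : 1 ≤ i := by omega
    -- i + 1 < j
    have hlt : i + 1 < j := by
      rcases Nat.lt_or_ge (i+1) j with h | h
      · exact h
      · exfalso
        have : i + 1 = j := by omega
        rw [← this] at heq
        exact X.irrefl (heq ▸ h1 i (by omega))
    have ha1 : X.Adj (f i) (f (i-1)) := by
      have := h1 (i-1) (by omega)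
      have hii : i - 1 + 1 = i := by omega
      rw [hii] at this
      exact this.symm
    have ha2 : X.Adj (f i) (f (i+1)) := h1 i (by omega)
    have ha3 : X.Adj (f i) (f (j-1)) := (heq ▸ hadjlast).symm
    rcases hdeg (f i) (f (j-1)) (f (i-1)) (f (i+1)) ha3 ha1 ha2 with h | h | h
    · exact hinj (i-1) (j-1) (by omega) (by omega) h.symm
    · rcases Nat.lt_or_ge (i+1) (j-1) with hc | hc
      · exact hinj (i+1) (j-1) hc (by omega) h.symm
      · have hij2 : j = i + 2 := by omega
        apply h2 i (by omega)
        rw [← hij2]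
        exact heq.symm
    · apply h2 (i-1) (by omega)
      have hii : i - 1 + 2 = i + 1 := by omega
      rw [hii]
      exact h.symm
  subst hi0
  have hj3 : 3 ≤ j := by
    by_contra hj
    interval_cases j
    · exact X.irrefl (heq ▸ h1 0 (by omega))
    · exact h2 0 (by omega) heq.symm
  refine ⟨rfl, hj3, h1 0 (by omega), (heq ▸ hadjlast).symm, hinj 1 (j-1) (by omega) (by omega)⟩

end SEG

namespace SEG
variable {V : Type*} {X : SimpleGraph V}

lemma exists_repeat [Fintype V] (f : ℕ → V) : ∃ a b, a < b ∧ f a = f b := by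
  have hcard : Fintype.card (Fin (Fintype.card V + 1)) > Fintype.card V := by simp
  obtain ⟨a, b, hab, heq⟩ :=
    Fintype.exists_ne_map_eq_of_card_lt (fun i : Fin (Fintype.card V + 1) => f i) hcard
  rcases Nat.lt_or_ge a.val b.val with h | h
  · exact ⟨a, b, h, heq⟩
  · have : b.val < a.val := by
      rcases Nat.lt_or_ge b.val a.val with h' | h'
      · exact h'
      · exact absurd (Fin.ext (by omega)) hab
    exact ⟨b, a, this, heq.symm⟩

lemma closure_surj (hconn : X.Preconnected) (S : Set V)
    (hcl : ∀ v ∈ S, ∀ w, X.Adj v w → w ∈ S) {u : V} (hu : u ∈ S) :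
    ∀ v, v ∈ S := by
  intro v
  obtain ⟨p⟩ := hconn u v
  induction p with
  | nil => exact hu
  | cons h q ih => exact ih (hcl _ hu _ h)

lemma exists_adj (hconn : X.Preconnected) (hE : X.edgeSet.Nonempty) (v : V) :
    ∃ w, X.Adj v w := by
  obtain ⟨e, he⟩ := hE
  induction e with
  | _ u1 u2 =>
    rw [mem_edgeSet] at he
    by_cases hv : v = u1
    · exact ⟨u2, hv ▸ he⟩
    · obtain ⟨p⟩ := hconn v u1
      cases p with
      | nil => exact absurd rfl hv
      | cons h q => exact ⟨_, h⟩

/-- build a path-graph isomorphism from a suitable enumeration -/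
lemma path_iso (f : ℕ → V) (j : ℕ) (hj : 1 ≤ j)
    (P1 : ∀ k, k + 1 < j → X.Adj (f k) (f (k+1)))
    (P2 : ∀ k, k < j → ∀ w, X.Adj (f k) w → ∃ l, l < j ∧ f l = w ∧ (l = k+1 ∨ k = l+1))
    (P3 : ∀ a b, a < j → b < j → f a = f b → a = b)
    (P4 : ∀ v, ∃ k, k < j ∧ f k = v) :
    Nonempty (X ≃g pathGraph j) := by
  have hbij : Function.Bijective (fun i : Fin j => f i) := by
    constructor
    · intro a b hab
      exact Fin.ext (P3 a b a.isLt b.isLt hab)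
    · intro v
      obtain ⟨k, hk, hfk⟩ := P4 v
      exact ⟨⟨k, hk⟩, hfk⟩
  set g := Equiv.ofBijective _ hbij with hg
  refine ⟨⟨g.symm, ?_⟩⟩
  intro u v
  have hgu : f (g.symm u).val = u := by
    have := g.apply_symm_apply u
    exact this
  have hgv : f (g.symm v).val = v := by
    have := g.apply_symm_apply v
    exact this
  rw [pathGraph_adj]
  constructor
  · rintro (h | h)
    · have := P1 (g.symm u).val (by omega)
      rw [hgu] at this
      have h2 : ((g.symm u).val + 1) = (g.symm v).val := h
      rw [h2, hgv] at this
      exact this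
    · have := P1 (g.symm v).val (by omega)
      rw [hgv] at this
      have h2 : ((g.symm v).val + 1) = (g.symm u).val := h
      rw [h2, hgu] at this
      exact this.symm
  · intro h
    have := P2 (g.symm u).val (g.symm u).isLt v (by rw [hgu]; exact h)
    obtain ⟨l, hl, hfl, hrel⟩ := this
    have : l = (g.symm v).val := by
      apply P3 l (g.symm v).val hl (g.symm v).isLt
      rw [hfl, hgv]
    omega

end SEG

namespace SEG
variable {V : Type*} {X : SimpleGraph V}

lemma fin_succ_val {m : ℕ} (a b : Fin (m+2)) :
    b = a + 1 ↔ b.val = (a.val + 1) % (m+2) := by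
  rw [Fin.ext_iff, Fin.add_def, Fin.val_one]

lemma cyc_adj_iff {m : ℕ} (a b : Fin (m+2)) :
    (cycleGraph (m+2)).Adj a b ↔ (a = b + 1 ∨ b = a + 1) := by
  rw [cycleGraph_adj, sub_eq_iff_eq_add, sub_eq_iff_eq_add, add_comm 1 b, add_comm 1 a]

/-- build a cycle-graph isomorphism from a suitable enumeration -/
lemma cycle_iso (f : ℕ → V) (j : ℕ) (hj : 3 ≤ j)
    (C1 : ∀ k, k < j → X.Adj (f k) (f ((k+1) % j)))
    (C2 : ∀ k, k < j → ∀ w, X.Adj (f k) w →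
        ∃ l, l < j ∧ f l = w ∧ (l = (k+1) % j ∨ k = (l+1) % j))
    (C3 : ∀ a b, a < j → b < j → f a = f b → a = b)
    (C4 : ∀ v, ∃ k, k < j ∧ f k = v) :
    Nonempty (X ≃g cycleGraph j) := by
  obtain ⟨m, rfl⟩ : ∃ m, j = m + 2 := ⟨j - 2, by omega⟩
  have hbij : Function.Bijective (fun i : Fin (m+2) => f i) := by
    constructor
    · intro a b hab
      exact Fin.ext (C3 a b a.isLt b.isLt hab)
    · intro v
      obtain ⟨k, hk, hfk⟩ := C4 v
      exact ⟨⟨k, hk⟩, hfk⟩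
  set g := Equiv.ofBijective _ hbij with hg
  refine ⟨⟨g.symm, ?_⟩⟩
  intro u v
  have hgu : f (g.symm u).val = u := g.apply_symm_apply u
  have hgv : f (g.symm v).val = v := g.apply_symm_apply v
  rw [cyc_adj_iff]
  constructor
  · rintro (h | h)
    · -- g.symm u = g.symm v + 1
      have hval : (g.symm u).val = ((g.symm v).val + 1) % (m+2) := (fin_succ_val _ _).mp h
      have := C1 (g.symm v).val (g.symm v).isLt
      rw [hgv, ← hval, hgu] at this
      exact this.symm
    · have hval : (g.symm v).val = ((g.symm u).val + 1) % (m+2) := (fin_succ_val _ _).mp h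
      have := C1 (g.symm u).val (g.symm u).isLt
      rw [hgu, ← hval, hgv] at this
      exact this
  · intro h
    obtain ⟨l, hl, hfl, hrel⟩ := C2 (g.symm u).val (g.symm u).isLt v (by rw [hgu]; exact h)
    have hlval : l = (g.symm v).val := by
      apply C3 l (g.symm v).val hl (g.symm v).isLt
      rw [hfl, hgv]
    subst hlval
    rcases hrel with h' | h'
    · right
      exact (fin_succ_val _ _).mpr h'
    · left
      exact (fin_succ_val _ _).mpr h'

end SEG

namespace SEG
variable {V : Type*} {X : SimpleGraph V}

lemma seq_zero (v0 v1 : V) : seq X v0 v1 0 = v0 := rfl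
lemma seq_one (v0 v1 : V) : seq X v0 v1 1 = v1 := rfl

lemma no_repeat_of_leaf
    (hdeg : ∀ v a b c : V, X.Adj v a → X.Adj v b → X.Adj v c → a = b ∨ a = c ∨ b = c)
    (f : ℕ → V) (M : ℕ)
    (h1 : ∀ k, k + 1 ≤ M → X.Adj (f k) (f (k+1)))
    (h2 : ∀ k, k + 2 ≤ M → f (k+2) ≠ f k)
    (hu : ∀ w, X.Adj (f 0) w → w = f 1) :
    ∀ a b, a < b → b ≤ M → f a ≠ f b := by
  classical
  intro a b hab hbM heq
  have hex : ∃ j, ∃ i, i < j ∧ f i = f j := ⟨b, a, hab, heq⟩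
  set j := Nat.find hex with hjdef
  obtain ⟨i, hi, heqi⟩ := Nat.find_spec hex
  have hjb : j ≤ b := Nat.find_min' hex ⟨a, hab, heq⟩
  have hinj : ∀ p q, p < q → q < j → f p ≠ f q := by
    intro p q hpq hqj hne
    exact Nat.find_min hex hqj ⟨p, hpq, hne⟩
  obtain ⟨-, -, -, hAj, hne2⟩ :=
    firstRepeat hdeg f j (fun k hk => h1 k (by omega)) (fun k hk => h2 k (by omega)) hinj i hi heqi
  exact hne2 ((hu _ hAj).symm)

lemma classify_path
    (hdeg : ∀ v a b c : V, X.Adj v a → X.Adj v b → X.Adj v c → a = b ∨ a = c ∨ b = c)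
    (hconn : X.Connected) [Fintype V]
    (v0 v1 : V) (hv01 : X.Adj v0 v1) (hu : ∀ w, X.Adj v0 w → w = v1) :
    ∃ n : ℕ, 2 ≤ n ∧ Nonempty (X ≃g pathGraph n) := by
  classical
  set f := seq X v0 v1 with hf
  have hf0 : f 0 = v0 := rfl
  have hf1 : f 1 = v1 := rfl
  have hu' : ∀ w, X.Adj (f 0) w → w = f 1 := hu
  -- Step A: the process stops
  have hstop : ∃ N, ¬∃ w, X.Adj (f (N+1)) w ∧ w ≠ f N := by
    by_contra hc
    push_neg at hc
    have h1 : ∀ k, X.Adj (f k) (f (k+1)) := by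
      intro k
      cases k with
      | zero => exact hv01
      | succ m => exact (seq_step m (hc m)).1
    have h2 : ∀ k, f (k+2) ≠ f k := fun k => (seq_step k (hc k)).2
    obtain ⟨a, b, hab, heq⟩ := exists_repeat f
    exact no_repeat_of_leaf hdeg f b (fun k _ => h1 k) (fun k _ => h2 k) hu' a b hab le_rfl heq
  set N := Nat.find hstop with hNdef
  have hstopN : ∀ w, X.Adj (f (N+1)) w → w = f N := by
    have h := Nat.find_spec hstop
    rw [← hNdef] at h
    push_neg at h
    exact h
  have halive : ∀ k, k < N → ∃ w, X.Adj (f (k+1)) w ∧ w ≠ f k := by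
    intro k hk
    rw [hNdef] at hk
    have h := Nat.find_min hstop hk
    exact not_not.mp h
  have h1 : ∀ k, k ≤ N → X.Adj (f k) (f (k+1)) := by
    intro k hk
    cases k with
    | zero => exact hv01
    | succ m => exact (seq_step m (halive m (by omega))).1
  have h2 : ∀ k, k < N → f (k+2) ≠ f k := fun k hk => (seq_step k (halive k hk)).2
  have hinj : ∀ a b, a < b → b < N + 2 → f a ≠ f b :=
    fun a b hab hb => no_repeat_of_leaf hdeg f (N+1)
      (fun k hk => h1 k (by omega)) (fun k hk => h2 k (by omega)) hu' a b hab (by omega)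
  -- bundle
  have P1 : ∀ k, k + 1 < N + 2 → X.Adj (f k) (f (k+1)) := fun k hk => h1 k (by omega)
  have P2 : ∀ k, k < N + 2 → ∀ w, X.Adj (f k) w →
      ∃ l, l < N + 2 ∧ f l = w ∧ (l = k+1 ∨ k = l+1) := by
    intro k hk w hw
    rcases Nat.eq_zero_or_pos k with rfl | hk1
    · exact ⟨1, by omega, (hu' w hw).symm, Or.inl rfl⟩
    rcases Nat.lt_or_ge k (N+1) with hkN | hkN
    · -- middle
      have ha1 : X.Adj (f k) (f (k-1)) := by
        have := h1 (k-1) (by omega)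
        have hkk : k - 1 + 1 = k := by omega
        rw [hkk] at this
        exact this.symm
      have ha2 : X.Adj (f k) (f (k+1)) := h1 k (by omega)
      have hne : f (k-1) ≠ f (k+1) := by
        have := h2 (k-1) (by omega)
        have hkk : k - 1 + 2 = k + 1 := by omega
        rw [hkk] at this
        exact fun hh => this hh.symm
      rcases hdeg (f k) w (f (k-1)) (f (k+1)) hw ha1 ha2 with h | h | h
      · exact ⟨k-1, by omega, h.symm, Or.inr (by omega)⟩
      · exact ⟨k+1, by omega, h.symm, Or.inl rfl⟩
      · exact absurd h hne
    · -- k = N+1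
      have hkeq : k = N + 1 := by omega
      subst hkeq
      exact ⟨N, by omega, (hstopN w hw).symm, Or.inr rfl⟩
  have P3 : ∀ a b, a < N + 2 → b < N + 2 → f a = f b → a = b := by
    intro a b ha hb heq
    rcases Nat.lt_trichotomy a b with h | h | h
    · exact absurd heq (hinj a b h hb)
    · exact h
    · exact absurd heq.symm (hinj b a h ha)
  have P4 : ∀ v, ∃ k, k < N + 2 ∧ f k = v := by
    have hcl : ∀ v ∈ {v | ∃ k, k < N + 2 ∧ f k = v}, ∀ w, X.Adj v w →
        w ∈ {v | ∃ k, k < N + 2 ∧ f k = v} := by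
      rintro v ⟨k, hk, rfl⟩ w hw
      obtain ⟨l, hl, hfl, -⟩ := P2 k hk w hw
      exact ⟨l, hl, hfl⟩
    have := closure_surj hconn.preconnected _ hcl (⟨0, by omega, rfl⟩ :
      f 0 ∈ {v | ∃ k, k < N + 2 ∧ f k = v})
    exact this
  exact ⟨N + 2, by omega, path_iso f (N+2) (by omega) P1 P2 P3 P4⟩

end SEG

namespace SEG
variable {V : Type*} {X : SimpleGraph V}

lemma classify_cycle
    (hdeg : ∀ v a b c : V, X.Adj v a → X.Adj v b → X.Adj v c → a = b ∨ a = c ∨ b = c)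
    (hconn : X.Connected) [Fintype V]
    (hcyc : ∀ v : V, ∃ a b, X.Adj v a ∧ X.Adj v b ∧ a ≠ b)
    (v0 : V) :
    ∃ n : ℕ, 3 ≤ n ∧ Nonempty (X ≃g cycleGraph n) := by
  classical
  obtain ⟨v1, -, hv01, -, -⟩ := hcyc v0
  set f := seq X v0 v1 with hf
  have h1 : ∀ k, X.Adj (f k) (f (k+1)) := by
    intro k
    induction k using Nat.strong_induction_on with
    | _ k ih =>
      cases k with
      | zero => exact hv01
      | succ m =>
        have hm : X.Adj (f m) (f (m+1)) := ih m (by omega)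
        obtain ⟨a, b, ha, hb, hab⟩ := hcyc (f (m+1))
        have hex : ∃ w, X.Adj (f (m+1)) w ∧ w ≠ f m := by
          by_cases haf : a = f m
          · exact ⟨b, hb, fun hc => hab (haf ▸ hc ▸ rfl)⟩
          · exact ⟨a, ha, haf⟩
        exact (seq_step m hex).1
  have halive : ∀ k, ∃ w, X.Adj (f (k+1)) w ∧ w ≠ f k := by
    intro k
    obtain ⟨a, b, ha, hb, hab⟩ := hcyc (f (k+1))
    by_cases haf : a = f k
    · exact ⟨b, hb, fun hc => hab (haf ▸ hc ▸ rfl)⟩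
    · exact ⟨a, ha, haf⟩
  have h2 : ∀ k, f (k+2) ≠ f k := fun k => (seq_step k (halive k)).2
  obtain ⟨a, b, hab, heqab⟩ := exists_repeat f
  have hex : ∃ j, ∃ i, i < j ∧ f i = f j := ⟨b, a, hab, heqab⟩
  set j := Nat.find hex with hjdef
  obtain ⟨i, hi, heqi⟩ := Nat.find_spec hex
  rw [← hjdef] at hi heqi
  have hinj : ∀ p q, p < q → q < j → f p ≠ f q := by
    intro p q hpq hqj hne
    rw [hjdef] at hqj
    exact Nat.find_min hex hqj ⟨p, hpq, hne⟩
  obtain ⟨hi0, hj3, -, hAj, hne1j⟩ :=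
    firstRepeat hdeg f j (fun k _ => h1 k) (fun k _ => h2 k) hinj i hi heqi
  subst hi0
  -- heqi : f 0 = f j
  have C1 : ∀ k, k < j → X.Adj (f k) (f ((k+1) % j)) := by
    intro k hk
    rcases Nat.lt_or_ge (k+1) j with h | h
    · rw [Nat.mod_eq_of_lt h]
      exact h1 k
    · have hkj : k + 1 = j := by omega
      rw [hkj, Nat.mod_self, heqi, ← hkj]
      exact h1 k
  have C2 : ∀ k, k < j → ∀ w, X.Adj (f k) w →
      ∃ l, l < j ∧ f l = w ∧ (l = (k+1) % j ∨ k = (l+1) % j) := by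
    intro k hk w hw
    rcases Nat.eq_zero_or_pos k with rfl | hk1
    · have hne : w = f 1 ∨ w = f (j-1) := by
        rcases hdeg (f 0) w (f 1) (f (j-1)) hw (h1 0) hAj with h | h | h
        · exact Or.inl h
        · exact Or.inr h
        · exact absurd h hne1j
      rcases hne with rfl | rfl
      · exact ⟨1, by omega, rfl, Or.inl (by rw [Nat.mod_eq_of_lt (by omega)])⟩
      · refine ⟨j-1, by omega, rfl, Or.inr ?_⟩
        have : j - 1 + 1 = j := by omega
        rw [this, Nat.mod_self]
    · have ha1 : X.Adj (f k) (f (k-1)) := by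
        have := h1 (k-1)
        have hkk : k - 1 + 1 = k := by omega
        rw [hkk] at this
        exact this.symm
      have ha2 : X.Adj (f k) (f (k+1)) := h1 k
      have hnec : f (k-1) ≠ f (k+1) := by
        have := h2 (k-1)
        have hkk : k - 1 + 2 = k + 1 := by omega
        rw [hkk] at this
        exact fun hh => this hh.symm
      rcases hdeg (f k) w (f (k-1)) (f (k+1)) hw ha1 ha2 with h | h | h
      · -- w = f (k-1)
        refine ⟨k-1, by omega, h.symm, Or.inr ?_⟩
        have : k - 1 + 1 = k := by omega
        rw [this, Nat.mod_eq_of_lt hk]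
      · -- w = f (k+1)
        rcases Nat.lt_or_ge (k+1) j with hlt | hge
        · exact ⟨k+1, hlt, h.symm, Or.inl (by rw [Nat.mod_eq_of_lt hlt])⟩
        · have hkj : k + 1 = j := by omega
          refine ⟨0, by omega, ?_, Or.inl ?_⟩
          · rw [heqi, ← hkj]; exact h.symm
          · rw [hkj, Nat.mod_self]
      · exact absurd h hnec
  have C3 : ∀ p q, p < j → q < j → f p = f q → p = q := by
    intro p q hp hq heq
    rcases Nat.lt_trichotomy p q with h | h | h
    · exact absurd heq (hinj p q h hq)
    · exact h
    · exact absurd heq.symm (hinj q p h hp)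
  have C4 : ∀ v, ∃ k, k < j ∧ f k = v := by
    have hcl : ∀ v ∈ {v | ∃ k, k < j ∧ f k = v}, ∀ w, X.Adj v w →
        w ∈ {v | ∃ k, k < j ∧ f k = v} := by
      rintro v ⟨k, hk, rfl⟩ w hw
      obtain ⟨l, hl, hfl, -⟩ := C2 k hk w hw
      exact ⟨l, hl, hfl⟩
    exact closure_surj hconn.preconnected _ hcl (⟨0, by omega, rfl⟩ :
      f 0 ∈ {v | ∃ k, k < j ∧ f k = v})
  exact ⟨j, hj3, cycle_iso f j hj3 C1 C2 C3 C4⟩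

end SEG

/-- For a finite connected simple graph `X` with at least one edge, `γ(X)` is connected
iff `X` is neither a cycle graph `Cₙ` (`n ≥ 3`) nor a path graph `Pₙ` (`n ≥ 2`). -/
theorem symEdgeGraph_connected_iff {V : Type*} [Fintype V]
    (X : SimpleGraph V) (hconn : X.Connected) (hE : X.edgeSet.Nonempty) :
    (symEdgeGraph X).Connected ↔
      (¬ ∃ n : ℕ, 3 ≤ n ∧ Nonempty (X ≃g cycleGraph n)) ∧
      (¬ ∃ n : ℕ, 2 ≤ n ∧ Nonempty (X ≃g pathGraph n)) := by
  constructor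
  · intro hG
    constructor
    · rintro ⟨n, hn, ⟨e⟩⟩
      exact SEG.not_connected_cycle hn e hG
    · rintro ⟨n, hn, ⟨e⟩⟩
      exact SEG.not_connected_path hn e hG
  · rintro ⟨hc, hp⟩
    by_cases hdeg : ∃ (v a b c : V), X.Adj v a ∧ X.Adj v b ∧ X.Adj v c ∧ a ≠ b ∧ a ≠ c ∧ b ≠ c
    · obtain ⟨v, a, b, c, h⟩ := hdeg
      exact SEG.connected_of_deg3 hconn v ⟨a, b, c, h⟩
    · have hdeg' : ∀ v a b c : V, X.Adj v a → X.Adj v b → X.Adj v c →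
          a = b ∨ a = c ∨ b = c := by
        intro v a b c ha hb hcc
        by_contra hcon
        push_neg at hcon
        exact hdeg ⟨v, a, b, c, ha, hb, hcc, hcon.1, hcon.2.1, hcon.2.2⟩
      by_cases hleaf : ∃ v0 v1 : V, X.Adj v0 v1 ∧ ∀ w, X.Adj v0 w → w = v1
      · obtain ⟨v0, v1, h01, hu⟩ := hleaf
        exact absurd (SEG.classify_path hdeg' hconn v0 v1 h01 hu) hp
      · have hcyc : ∀ v : V, ∃ a b, X.Adj v a ∧ X.Adj v b ∧ a ≠ b := by
          intro v
          obtain ⟨w, hw⟩ := SEG.exists_adj hconn.preconnected hE v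
          have h3 : ∃ w', X.Adj v w' ∧ w' ≠ w := by
            by_contra h4
            push_neg at h4
            exact hleaf ⟨v, w, hw, h4⟩
          obtain ⟨w', hw', hne⟩ := h3
          exact ⟨w', w, hw', hw, hne⟩
        exact absurd (SEG.classify_cycle hdeg' hconn hcyc hconn.nonempty.some) hc
end

section
/- Let X be a finite connected simple graph with at least one edge. Then X is bipartite if and only if γ(X) is bipartite. -/
open SimpleGraph

private lemma fin2_eq_of_ne_of_ne : ∀ a b x : Fin 2, a ≠ x → b ≠ x → a = b := by decide

private lemma fin2_iff_not : ∀ p q r : Fin 2, q ≠ r → ((p = r) ↔ ¬(p = q)) := by decide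

section Aux

variable {V : Type*} {X : SimpleGraph V}

/-- Composable non-backtracking darts get different colors. -/
lemma symEdge_L1 (c : (symEdgeGraph X).Coloring (Fin 2)) {d e : X.Dart}
    (h1 : d.snd = e.fst) (h2 : d.fst ≠ e.snd) : c d ≠ c e :=
  c.valid (Or.inl ⟨h1, h2⟩)

/-- Colors alternate along a walk with no repeated vertices, relative to an
incoming dart whose head is the start of the walk and whose tail avoids the walk. -/
lemma symEdge_alt (c : (symEdgeGraph X).Coloring (Fin 2)) :
    ∀ {a b : V} (t : X.Walk a b), t.support.Nodup → ∀ (d : X.Dart),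
      d.snd = a → d.fst ∉ t.support →
      ∃ e : X.Dart, e.snd = b ∧ (t.Nil → e = d) ∧ (¬ t.Nil → e ∈ t.darts) ∧
        (c e = c d ↔ Even t.length) := by
  intro a b t
  induction t with
  | nil =>
    intro _ d hda _
    exact ⟨d, hda, fun _ => rfl, fun hn => absurd Walk.nil_nil hn, by simp⟩
  | @cons a x b h q IH =>
    intro ht d hda hdf
    rw [Walk.support_cons, List.nodup_cons] at ht
    rw [Walk.support_cons, List.mem_cons] at hdf
    push_neg at hdf
    set f : X.Dart := ⟨(a, x), h⟩ with hf
    have hdfne : c d ≠ c f := by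
      refine symEdge_L1 c (by simpa using hda) ?_
      show d.fst ≠ x
      exact fun hc => hdf.2 (hc ▸ q.start_mem_support)
    obtain ⟨e, heb, henil, hemem, hepar⟩ := IH ht.2 f rfl (by simpa using ht.1)
    refine ⟨e, heb, fun hn => absurd hn Walk.not_nil_cons, fun _ => ?_, ?_⟩
    · rw [Walk.darts_cons]
      by_cases hq : q.Nil
      · rw [henil hq]; exact List.mem_cons_self
      · exact List.mem_cons_of_mem _ (hemem hq)
    · rw [Walk.length_cons]
      rw [fin2_iff_not (c e) (c f) (c d) hdfne.symm, hepar, Nat.even_add_one]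

/-- A closed walk with no duplicate vertices in its support is nil. -/
lemma closed_nodup_nil {v : V} (p : X.Walk v v) (hp : p.support.Nodup) : p.Nil := by
  cases p with
  | nil => exact Walk.nil_nil
  | cons h q =>
    rw [Walk.support_cons, List.nodup_cons] at hp
    exact absurd q.end_mem_support hp.1

lemma exists_concat {y u : V} (t : X.Walk y u) (h : ¬ t.Nil) :
    ∃ (z : V) (h' : X.Adj z u) (t' : X.Walk y z), t = t'.concat h' := by
  have hr : ¬ t.reverse.Nil := by
    rw [Walk.nil_iff_length_eq, Walk.length_reverse, ← Walk.nil_iff_length_eq]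
    exact h
  obtain ⟨z, h'', r, hrr⟩ := Walk.not_nil_iff.mp hr
  refine ⟨z, h''.symm, r.reverse, ?_⟩
  rw [← t.reverse_reverse, hrr, Walk.reverse_cons]
  rfl

/-- The "odd cycle" contradiction: an edge `u ~ y` plus a vertex-disjoint walk back
from `y` to `u` of even length contradicts a 2-coloring of the symmetric edge graph. -/
lemma symEdge_cyc (c : (symEdgeGraph X).Coloring (Fin 2)) {u y : V} (h : X.Adj u y)
    (t : X.Walk y u) (hnd : t.support.Nodup) (hodd : Odd (t.length + 1)) : False := by
  by_cases hnil : t.Nil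
  · have := Walk.eq_of_length_eq_zero (Walk.nil_iff_length_eq.mp hnil)
    exact X.loopless.irrefl u (this ▸ h)
  obtain ⟨z, h', t', rfl⟩ := exists_concat t hnil
  rw [Walk.support_concat] at hnd
  rw [List.nodup_append] at hnd
  obtain ⟨hnd', -, hdisj⟩ := hnd
  have hu_not : u ∉ t'.support := fun hu => hdisj u hu u (List.mem_singleton_self u) rfl
  have hlen : (t'.concat h').length = t'.length + 1 := Walk.length_concat _ _
  have hodd' : Odd t'.length := by
    rw [hlen] at hodd
    rcases hodd with ⟨k, hk⟩
    exact ⟨k - 1, by omega⟩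
  have ht'nn : ¬ t'.Nil := by
    rw [Walk.nil_iff_length_eq]
    rcases hodd' with ⟨k, hk⟩; omega
  have hzy : z ≠ y := by
    intro hc
    subst hc
    exact ht'nn (closed_nodup_nil t' hnd')
  set d0 : X.Dart := ⟨(u, y), h⟩ with hd0
  obtain ⟨e, hez, -, hemem, hepar⟩ := symEdge_alt c t' hnd' d0 rfl hu_not
  have hefst : e.fst ≠ u := by
    intro hc
    exact hu_not (hc ▸ Walk.dart_fst_mem_support_of_mem_darts _ (hemem ht'nn))
  set g : X.Dart := ⟨(z, u), h'⟩ with hg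
  have h1 : c e ≠ c g := symEdge_L1 c (by simpa using hez) hefst
  have h2 : c d0 ≠ c g := (symEdge_L1 c (show g.snd = d0.fst from rfl)
    (show g.fst ≠ d0.snd from hzy)).symm
  have := fin2_eq_of_ne_of_ne _ _ _ h1 h2
  rw [hepar] at this
  exact (Nat.not_even_iff_odd.mpr hodd') this

/-- If the symmetric edge graph is 2-colorable then `X` has no odd closed walk. -/
lemma symEdge_no_odd_closed (c : (symEdgeGraph X).Coloring (Fin 2)) :
    ∀ (n : ℕ), Odd n → ∀ (u : V) (w : X.Walk u u), w.length = n → False := by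
  classical
  intro n
  induction n using Nat.strong_induction_on with
  | _ n IH =>
    intro hodd u w hlen
    cases w with
    | nil =>
      simp only [Walk.length_nil] at hlen
      subst hlen; simp [Nat.odd_iff] at hodd
    | @cons _ y _ h t =>
      rw [Walk.length_cons] at hlen
      by_cases hnd : t.support.Nodup
      · exact symEdge_cyc c h t hnd (hlen ▸ hodd)
      · obtain ⟨x, hdup⟩ := List.exists_duplicate_iff_not_nodup.mpr hnd
        have hx : x ∈ t.support := hdup.mem
        have hcount : 2 ≤ t.support.count x := List.duplicate_iff_two_le_count.mp hdup
        set t1 := t.takeUntil x hx with ht1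
        set t2 := t.dropUntil x hx with ht2
        have hts : t1.append t2 = t := t.take_spec hx
        have hc1 : t1.support.count x = 1 := t.count_support_takeUntil_eq_one hx
        have hcount2 : 1 ≤ t2.support.tail.count x := by
          have : t.support.count x = t1.support.count x + t2.support.tail.count x := by
            rw [← hts, Walk.support_append, List.count_append]
          omega
        have hxt2 : x ∈ t2.support.tail := by
          rw [← List.count_pos_iff]; omega
        have ht2nn : ¬ t2.Nil := by
          intro hn
          have hlen2 : t2.support.length = 1 := by
            rw [Walk.length_support, Walk.nil_iff_length_eq.mp hn]
          have : t2.support.tail = [] := by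
            have := t2.support.length_tail
            rw [hlen2] at this
            exact List.eq_nil_of_length_eq_zero this
          rw [this] at hxt2
          exact List.not_mem_nil hxt2
        obtain ⟨z, h2, s, hs⟩ := Walk.not_nil_iff.mp ht2nn
        have hxs : x ∈ s.support := by
          rw [hs, Walk.support_cons] at hxt2
          exact hxt2
        set s1 := s.takeUntil x hxs with hs1
        set s2 := s.dropUntil x hxs with hs2
        have hss : s1.append s2 = s := s.take_spec hxs
        -- two shorter closed walks
        have hlent : t1.length + t2.length = t.length := by
          rw [← hts, Walk.length_append]
        have hlent2 : t2.length = s.length + 1 := by rw [hs, Walk.length_cons]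
        have hlens : s1.length + s2.length = s.length := by
          rw [← hss, Walk.length_append]
        set C1 : X.Walk x x := Walk.cons h2 s1 with hC1
        set C2 : X.Walk x x := s2.append (Walk.cons h t1) with hC2
        have hl1 : C1.length = s1.length + 1 := Walk.length_cons _ _
        have hl2 : C2.length = s2.length + (t1.length + 1) := by
          rw [hC2, Walk.length_append, Walk.length_cons]
        have hsum : C1.length + C2.length = n := by omega
        rw [Nat.odd_iff] at hodd
        by_cases hpar : Odd C1.length
        · exact IH C1.length (by omega) hpar x C1 rfl
        · rw [Nat.odd_iff] at hpar
          push_neg at hpar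
          have : Odd C2.length := by rw [Nat.odd_iff]; omega
          exact IH C2.length (by omega) this x C2 rfl

end Aux

/-- For a finite connected simple graph `X` with at least one edge, `X` is bipartite
(2-colorable) if and only if `γ(X)` is bipartite. -/
theorem symEdgeGraph_bipartite_iff {V : Type*} [Fintype V]
    (X : SimpleGraph V) (hconn : X.Connected) (hE : X.edgeSet.Nonempty) :
    X.Colorable 2 ↔ (symEdgeGraph X).Colorable 2 := by
  constructor
  · rintro ⟨C⟩
    refine ⟨Coloring.mk (fun d => C d.fst) ?_⟩
    rintro d e (⟨h1, h2⟩ | ⟨h1, h2⟩)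
    · have := C.valid d.adj
      rw [h1] at this
      exact this
    · have := C.valid e.adj
      rw [h1] at this
      exact this.symm
  · rintro ⟨c⟩
    have NOC : ∀ (u : V) (w : X.Walk u u), ¬ Odd w.length :=
      fun u w ho => symEdge_no_odd_closed c w.length ho u w rfl
    have key : ∀ {a b : V} (p q : X.Walk a b), (Even p.length ↔ Even q.length) := by
      intro a b p q
      have h := NOC a (p.append q.reverse)
      rw [Walk.length_append, Walk.length_reverse, Nat.odd_iff] at h
      push_neg at h
      rw [Nat.even_iff, Nat.even_iff]
      omega
    classical
    obtain ⟨r⟩ := hconn.nonempty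
    refine ⟨Coloring.mk
      (fun v => if Even ((hconn.preconnected r v).some.length) then 0 else 1) ?_⟩
    intro a b hab hfeq
    have hk := key ((hconn.preconnected r a).some.concat hab) (hconn.preconnected r b).some
    rw [Walk.length_concat] at hk
    by_cases hea : Even ((hconn.preconnected r a).some.length)
    · have h1 : ¬ Even ((hconn.preconnected r a).some.length + 1) := by
        rw [Nat.even_add_one]; exact fun hc => hc hea
      have heb : ¬ Even ((hconn.preconnected r b).some.length) := fun hc => h1 (hk.mpr hc)
      simp [hea, heb] at hfeq
    · have heb : Even ((hconn.preconnected r b).some.length) := by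
        apply hk.mp
        rw [Nat.even_add_one]
        exact hea
      simp [hea, heb] at hfeq
end
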